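/- Let V be a real vector space, let g be a symmetric bilinear form on V, and let ξ ∈ V satisfy g(ξ,ξ) = −1; define η(x) = g(x,ξ). Let β, τ, ρ, p, μ, r, λ be real numbers with β ≠ 0 and τ ≠ 0. If (1/(4τ))·(4μ − r + 2λ/β)·g(x,y) = (ρ − p)·η(x)·η(y) + p·g(x,y) for all x, y ∈ V, then λ = (β/2)·(4τ·(2p − ρ) + r − 4μ). -/

import Mathlib

theorem stmt_5_general (V : Type*) [AddCommGroup V] [Module ℝ V]
    (g : LinearMap.BilinForm ℝ V)
    (ξ : V) (hξ : g ξ ξ = -1)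
    (η : V → ℝ) (hη : ∀ x : V, η x = g x ξ)
    (β τ ρ p μ r lam : ℝ) (hβ : β ≠ 0) (hτ : τ ≠ 0)
    (h : ∀ x y : V, (1 / (4 * τ)) * (4 * μ - r + 2 * lam / β) * g x y =
      (ρ - p) * η x * η y + p * g x y) :
    lam = (β / 2) * (4 * τ * (2 * p - ρ) + r - 4 * μ) := by
  have hcoef : (1 / (4 * τ)) * (4 * μ - r + 2 * lam / β) = 2 * p - ρ := by
    have hξξ := h ξ ξ
    rw [hη, hξ] at hξξ
    linarith
  field_simp at hcoef
  linarith

theorem stmt_5 (V : Type*) [AddCommGroup V] [Module ℝ V]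
    (g : LinearMap.BilinForm ℝ V) (hsymm : ∀ x y : V, g x y = g y x)
    (ξ : V) (hξ : g ξ ξ = -1)
    (η : V → ℝ) (hη : ∀ x : V, η x = g x ξ)
    (β τ ρ p μ r lam : ℝ) (hβ : β ≠ 0) (hτ : τ ≠ 0)
    (h : ∀ x y : V, (1 / (4 * τ)) * (4 * μ - r + 2 * lam / β) * g x y =
      (ρ - p) * η x * η y + p * g x y) :
    lam = (β / 2) * (4 * τ * (2 * p - ρ) + r - 4 * μ) :=
  stmt_5_general V g ξ hξ η hη β τ ρ p μ r lam hβ hτ h
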